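/- Backward direction of the kSUM reduction for two machines: let x_1,…,x_h be positive integers, let T = Σ_{i=1}^h x_i, and let k, B be positive integers with 1 ≤ k < h and B < T. Consider the two-machine JIT flow-shop instance with kh+1 jobs: for each i ∈ {1,…,k} and j ∈ {1,…,h} a job J_{ij} with p^(1)_{ij} = x_j, p^(2)_{ij} = 1, w_{ij} = T + x_j, d_{ij} = iT; and a job J_{kh+1} with p^(1)_{kh+1} = (k+1)T − B, p^(2)_{kh+1} = 1, w_{kh+1} = k²(T+1)², d_{kh+1} = (k+1)T + 1. If this instance admits a feasible set E with Σ_{j∈E} w_j ≥ kT + B + k²(T+1)², then there exist indices j_1,…,j_k ∈ {1,…,h} (not necessarily distinct) with x_{j_1} + … + x_{j_k} = B. -/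

import Mathlib

open Finset

/-- A just-in-time flow-shop instance on `m` machines with jobs of type `J`:
`p i j` is the (positive integer) processing time of job `j` on machine `i`,
`d j` its positive integer due date and `w j` its positive integer weight. -/
structure JITInstance (m : ℕ) (J : Type) where
  p : Fin m → J → ℕ
  d : J → ℕ
  w : J → ℕ
  p_pos : ∀ i j, 0 < p i j
  d_pos : ∀ j, 0 < d j
  w_pos : ∀ j, 0 < w j

/-- `S` is a JIT schedule of the job set `E`: on every machine the processing
intervals `(S i j, S i j + p i j]` of distinct jobs of `E` are pairwise disjoint,
each job's operation on machine `i+1` starts no earlier than its completion on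
machine `i`, and every job of `E` completes on the last machine exactly at its
due date.  (Start times are nonnegative automatically, being naturals.) -/
def IsJITSchedule {m : ℕ} {J : Type} (I : JITInstance m J)
    (E : Finset J) (S : Fin m → J → ℕ) : Prop :=
  (∀ i : Fin m, ∀ j ∈ E, ∀ j' ∈ E, j ≠ j' →
      S i j + I.p i j ≤ S i j' ∨ S i j' + I.p i j' ≤ S i j) ∧
  (∀ j ∈ E, ∀ i i' : Fin m, i'.val = i.val + 1 →
      S i j + I.p i j ≤ S i' j) ∧
  (∀ j ∈ E, ∀ i : Fin m, i.val = m - 1 →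
      S i j + I.p i j = I.d j)

/-- A job set is feasible if it admits a JIT schedule. -/
def Feasible {m : ℕ} {J : Type} (I : JITInstance m J) (E : Finset J) : Prop :=
  ∃ S : Fin m → J → ℕ, IsJITSchedule I E S

/-- The two-machine JIT flow-shop instance constructed in the kSUM reduction:
for each `i ∈ {1,…,k}`, `j ∈ {1,…,h}` a job `J_{ij}` (encoded `Sum.inl (i, j)`,
0-indexed) with `p¹ = x j`, `p² = 1`, `w = T + x j`, `d = iT`, and one extra
job `J_{kh+1}` (encoded `Sum.inr ()`) with `p¹ = (k+1)T - B`, `p² = 1`,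
`w = k²(T+1)²`, `d = (k+1)T + 1`, where `T = ∑ i, x i`. -/
def ksumInstance2 (h k B : ℕ) (x : Fin h → ℕ) (hx : ∀ i, 0 < x i)
    (hk : 1 ≤ k) (hB : 0 < B) (hBT : B < ∑ i, x i) :
    JITInstance 2 (Fin k × Fin h ⊕ Unit) where
  p := fun i jb =>
    if i.val = 0 then
      Sum.elim (fun q => x q.2) (fun _ => (k + 1) * (∑ i, x i) - B) jb
    else 1
  d := Sum.elim (fun q => (q.1.val + 1) * (∑ i, x i))
    (fun _ => (k + 1) * (∑ i, x i) + 1)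
  w := Sum.elim (fun q => (∑ i, x i) + x q.2)
    (fun _ => k ^ 2 * ((∑ i, x i) + 1) ^ 2)
  p_pos := by
    intro i jb
    try dsimp only
    split
    · rcases jb with ⟨a, j⟩ | u
      · simpa using hx j
      · simp only [Sum.elim_inr]
        have h1 : (∑ i, x i) ≤ (k + 1) * (∑ i, x i) :=
          Nat.le_mul_of_pos_left _ (by omega)
        omega
    · exact one_pos
  d_pos := by
    rintro (⟨a, j⟩ | u)
    · simp only [Sum.elim_inl]
      exact Nat.mul_pos (by omega) (by omega)
    · simp only [Sum.elim_inr]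
      omega
  w_pos := by
    rintro (⟨a, j⟩ | u)
    · simp only [Sum.elim_inl]
      have := hx j
      omega
    · simp only [Sum.elim_inr]
      exact Nat.mul_pos (pow_pos (by omega : 0 < k) 2)
        (pow_pos (by omega : 0 < (∑ i, x i) + 1) 2)

/-!
Since every machine-2 operation has unit length and ends at its due date, the jobs of a feasible
set have pairwise distinct due dates, so `E` contains at most one job `J_{ij}` per row `i`.  Without
the huge-weight job `J_{kh+1}` the weight is at most `2kT`, so that job is in `E`; its first
operation must start by time `B`, and every chosen `J_{ij}`, which leaves the first machine before
time `kT < (k+1)T - B`, runs there before it.  Hence the chosen `x_j` sum to at most `B`, and the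
weight bound forces exactly `k` of them, one per row, summing to exactly `B`.
-/


theorem sum_le_of_nonoverlapping {ι : Type*} {s : Finset ι} {a p : ι → ℕ} {B : ℕ}
    (hdisj : ∀ i ∈ s, ∀ j ∈ s, i ≠ j → a i + p i ≤ a j ∨ a j + p j ≤ a i)
    (hle : ∀ i ∈ s, a i + p i ≤ B) :
    ∑ i ∈ s, p i ≤ B := by
  classical
  calc ∑ i ∈ s, p i = ∑ i ∈ s, #(Ioc (a i) (a i + p i)) := by simp
    _ = #(s.biUnion fun i => Ioc (a i) (a i + p i)) := by
        refine (card_biUnion fun i hi j hj hij => ?_).symm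
        simp only [Function.onFun, disjoint_left, mem_Ioc]
        have := hdisj i hi j hj hij
        omega
    _ ≤ #(Ioc 0 B) := card_le_card <| biUnion_subset.2 fun i hi =>
        Ioc_subset_Ioc (Nat.zero_le _) (hle i hi)
    _ = B := by simp

theorem Finset.exists_sum_eq_sum_graph {α β M : Type*} [Fintype α] [AddCommMonoid M]
    {s : Finset (α × β)} (hinj : Set.InjOn Prod.fst (s : Set (α × β)))
    (hcard : Fintype.card α ≤ #s) (g : α × β → M) :
    ∃ f : α → β, ∑ q ∈ s, g q = ∑ a, g (a, f a) := by
  classical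
  have himage : s.image Prod.fst = univ :=
    eq_univ_of_card _ (le_antisymm (card_le_univ _) (card_image_of_injOn hinj ▸ hcard))
  have hfiber (a : α) : ∃ b, (a, b) ∈ s := by
    obtain ⟨q, hq, rfl⟩ := mem_image.1 (himage ▸ mem_univ a)
    exact ⟨q.2, hq⟩
  choose f hf using hfiber
  refine ⟨f, (sum_nbij (fun a => (a, f a)) (fun a _ => hf a) ?_ ?_ fun _ _ => rfl).symm⟩
  · exact fun a _ a' _ h => congrArg Prod.fst h
  · intro q hq
    exact ⟨q.1, mem_coe.2 (mem_univ _), hinj (hf q.1) hq rfl⟩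

theorem eq_and_eq_of_mul_add_le {a k σ B T : ℕ} (ha : a ≤ k) (hσ : σ ≤ B) (hBT : B < T)
    (h : k * T + B ≤ a * T + σ) : a = k ∧ σ = B := by
  have hak : a = k := by
    by_contra hne
    have : (a + 1) * T ≤ k * T := Nat.mul_le_mul_right _ (by omega)
    nlinarith
  subst hak
  omega

namespace IsJITSchedule

variable {m : ℕ} {J : Type} {E : Finset J}

theorem injOn_d [NeZero m] {I : JITInstance m J} {S : Fin m → J → ℕ}
    (hS : IsJITSchedule I E S) : Set.InjOn I.d E := by
  intro j hj j' hj' hd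
  by_contra hne
  let last : Fin m := ⟨m - 1, Nat.sub_lt (NeZero.pos m) one_pos⟩
  have hdisj := hS.1 last j hj j' hj' hne
  have hj_due := hS.2.2 j hj last rfl
  have hj'_due := hS.2.2 j' hj' last rfl
  have := I.p_pos last j
  have := I.p_pos last j'
  omega

theorem add_p_add_p_le_d {I : JITInstance 2 J} {S : Fin 2 → J → ℕ}
    (hS : IsJITSchedule I E S) {j : J} (hj : j ∈ E) :
    S 0 j + I.p 0 j + I.p 1 j ≤ I.d j := by
  have := hS.2.1 j hj 0 1 rfl
  have := hS.2.2 j hj 1 rfl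
  omega

end IsJITSchedule

section KSum

variable {h k B : ℕ} {x : Fin h → ℕ} {hx : ∀ i, 0 < x i} {hk : 1 ≤ k} {hB : 0 < B}
  {hBT : B < ∑ i, x i}

local notation "𝓘" => ksumInstance2 h k B x hx hk hB hBT
local notation "T" => ∑ i, x i

@[simp] theorem ksumInstance2_p_zero_inl (q : Fin k × Fin h) : (𝓘).p 0 (.inl q) = x q.2 := rfl

@[simp] theorem ksumInstance2_p_zero_inr (u : Unit) : (𝓘).p 0 (.inr u) = (k + 1) * T - B := rfl

@[simp] theorem ksumInstance2_p_one (jb : Fin k × Fin h ⊕ Unit) : (𝓘).p 1 jb = 1 := rfl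

@[simp] theorem ksumInstance2_d_inl (q : Fin k × Fin h) :
    (𝓘).d (.inl q) = (q.1.val + 1) * T := rfl

@[simp] theorem ksumInstance2_d_inr (u : Unit) : (𝓘).d (.inr u) = (k + 1) * T + 1 := rfl

theorem ksumInstance2_sum_w (E : Finset (Fin k × Fin h ⊕ Unit)) :
    ∑ jb ∈ E, (𝓘).w jb
      = ∑ q ∈ E.toLeft, (T + x q.2) + #E.toRight * (k ^ 2 * (T + 1) ^ 2) := by
  conv_lhs => rw [← toLeft_disjSum_toRight (u := E), sum_disjSum]
  simp [ksumInstance2, sum_const]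

theorem ksum_inr_mem {E : Finset (Fin k × Fin h ⊕ Unit)} (hcard : #E.toLeft ≤ k)
    (hwt : k * T + B + k ^ 2 * (T + 1) ^ 2 ≤ ∑ jb ∈ E, (𝓘).w jb) :
    Sum.inr () ∈ E := by
  by_contra hnot
  have hright : E.toRight = ∅ := eq_empty_of_forall_notMem fun u hu => hnot (mem_toRight.1 hu)
  have hsmall : ∑ q ∈ E.toLeft, (T + x q.2) ≤ k * (T + T) :=
    calc ∑ q ∈ E.toLeft, (T + x q.2) ≤ #E.toLeft * (T + T) := by
          refine sum_le_card_nsmul _ _ _ fun q _ => ?_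
          exact Nat.add_le_add_left (single_le_sum (fun i _ => Nat.zero_le (x i)) (mem_univ _)) _
      _ ≤ k * (T + T) := Nat.mul_le_mul_right _ hcard
  have hbig : k * (T + 1) ≤ k ^ 2 * (T + 1) ^ 2 := by
    calc k * (T + 1) ≤ (k * (T + 1)) ^ 2 := Nat.le_self_pow two_ne_zero _
      _ = k ^ 2 * (T + 1) ^ 2 := mul_pow _ _ _
  rw [ksumInstance2_sum_w, hright, card_empty, zero_mul, add_zero] at hwt
  linarith

variable {E : Finset (Fin k × Fin h ⊕ Unit)} {S : Fin 2 → (Fin k × Fin h ⊕ Unit) → ℕ}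

theorem ksum_injOn_row (hS : IsJITSchedule 𝓘 E S) :
    Set.InjOn Prod.fst (E.toLeft : Set (Fin k × Fin h)) := by
  intro q hq q' hq' hrow
  simpa using hS.injOn_d (mem_toLeft.1 hq) (mem_toLeft.1 hq') (by simp [hrow])

theorem ksum_card_toLeft_le (hS : IsJITSchedule 𝓘 E S) : #E.toLeft ≤ k := by
  simpa using card_le_card_of_injOn Prod.fst (fun q _ => mem_univ q.1) (ksum_injOn_row hS)

theorem ksum_inl_completion_lt (hS : IsJITSchedule 𝓘 E S) {q : Fin k × Fin h}
    (hq : q ∈ E.toLeft) : S 0 (.inl q) + x q.2 < k * T := by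
  have hdue := hS.add_p_add_p_le_d (mem_toLeft.1 hq)
  have hrow : (q.1.val + 1) * T ≤ k * T := Nat.mul_le_mul_right _ q.1.2
  simp only [ksumInstance2_p_zero_inl, ksumInstance2_p_one, ksumInstance2_d_inl] at hdue
  omega

theorem ksum_inr_start_le (hS : IsJITSchedule 𝓘 E S) (hlong : Sum.inr () ∈ E) :
    S 0 (.inr ()) ≤ B := by
  have hdue := hS.add_p_add_p_le_d hlong
  have hBle : B ≤ (k + 1) * T := hBT.le.trans (Nat.le_mul_of_pos_left _ k.succ_pos)
  simp only [ksumInstance2_p_zero_inr, ksumInstance2_p_one, ksumInstance2_d_inr] at hdue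
  omega

theorem ksum_inl_completion_le_inr_start (hS : IsJITSchedule 𝓘 E S) (hlong : Sum.inr () ∈ E)
    {q : Fin k × Fin h} (hq : q ∈ E.toLeft) : S 0 (.inl q) + x q.2 ≤ S 0 (.inr ()) := by
  have hdisj := hS.1 0 _ (mem_toLeft.1 hq) _ hlong Sum.inl_ne_inr
  have hinl := ksum_inl_completion_lt hS hq
  have hkT : (k + 1) * T = k * T + T := Nat.succ_mul k T
  simp only [ksumInstance2_p_zero_inl, ksumInstance2_p_zero_inr] at hdisj
  omega

theorem ksum_sum_inl_le (hS : IsJITSchedule 𝓘 E S) (hlong : Sum.inr () ∈ E) :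
    ∑ q ∈ E.toLeft, x q.2 ≤ B := by
  refine sum_le_of_nonoverlapping (a := fun q => S 0 (.inl q)) (fun q hq q' hq' hne => ?_)
    fun q hq => (ksum_inl_completion_le_inr_start hS hlong hq).trans (ksum_inr_start_le hS hlong)
  simpa using hS.1 0 _ (mem_toLeft.1 hq) _ (mem_toLeft.1 hq') (Sum.inl_injective.ne hne)

end KSum

theorem ksum_two_machines_backward (h k B : ℕ) (x : Fin h → ℕ)
    (hx : ∀ i, 0 < x i) (hk : 1 ≤ k) (hB : 0 < B)
    (hBT : B < ∑ i, x i)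
    (E : Finset (Fin k × Fin h ⊕ Unit))
    (hfeas : Feasible (ksumInstance2 h k B x hx hk hB hBT) E)
    (hwt : k * (∑ i, x i) + B + k ^ 2 * ((∑ i, x i) + 1) ^ 2
      ≤ ∑ jb ∈ E, (ksumInstance2 h k B x hx hk hB hBT).w jb) :
    ∃ f : Fin k → Fin h, ∑ i, x (f i) = B := by
  obtain ⟨S, hS⟩ := hfeas
  have hcard := ksum_card_toLeft_le hS
  have hlong := ksum_inr_mem hcard hwt
  have hright : #E.toRight = 1 :=
    card_eq_one.2 ⟨(), eq_singleton_iff_unique_mem.2 ⟨mem_toRight.2 hlong, fun _ _ => rfl⟩⟩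
  rw [ksumInstance2_sum_w, hright, one_mul, sum_add_distrib, sum_const, smul_eq_mul] at hwt
  obtain ⟨hcard_eq, hsum⟩ :=
    eq_and_eq_of_mul_add_le hcard (ksum_sum_inl_le hS hlong) hBT (by omega)
  obtain ⟨f, hf⟩ := exists_sum_eq_sum_graph (ksum_injOn_row hS) (by simp [hcard_eq])
    fun q : Fin k × Fin h => x q.2
  exact ⟨f, hf ▸ hsum⟩
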